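/- arXiv:2301.13543 — 2 statements merged into one kernel-verified Lean document; each statement's English description precedes it below -/
import Mathlib

section
/- Let γ = γ₁γ₂ and γ' = γ'₁γ'₂ be two q-cycles in a 2-VASS with one unary counter given in binary-nadir decomposition (same binary-nadir state p), with eff_u(γ₁) = eff_u(γ'₁), eff_u(γ₂) = eff_u(γ'₂), guard_u(γ) = guard_u(γ'), len(γ₁) = len(γ'₁), len(γ₂) = len(γ'₂), and suppose eff_b(γ) > eff_b(γ') and guard_b(γ) < guard_b(γ'). Then the cycle σ = γ'₁γ₂ satisfies: eff_b(σ) > eff_b(γ), eff_u(σ) = eff_u(γ), guard_b(σ) > guard_b(γ), guard_u(σ) ≥ guard_u(γ), and len(σ) = len(γ). -/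
/-- Minimum prefix sum (the empty prefix contributes 0). -/
def pguard (l : List ℤ) : ℤ := (l.inits.map List.sum).foldr min 0

/-- Binary effect of a path given by its labels in ℤ × ℤ. -/
def effb (π : List (ℤ × ℤ)) : ℤ := (π.map Prod.fst).sum

/-- Unary effect. -/
def effu (π : List (ℤ × ℤ)) : ℤ := (π.map Prod.snd).sum

/-- Binary pguard. -/
def guardb (π : List (ℤ × ℤ)) : ℤ := pguard (π.map Prod.fst)

/-- Unary pguard. -/
def guardu (π : List (ℤ × ℤ)) : ℤ := pguard (π.map Prod.snd)

/-- The run following labels `π` from counter values `u` keeps both counters nonnegative. -/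
def ValidFrom (u : ℤ × ℤ) (π : List (ℤ × ℤ)) : Prop :=
  ∀ l ∈ π.inits, 0 ≤ u.1 + effb l ∧ 0 ≤ u.2 + effu l


lemma foldr_min_shift (x b : ℤ) (M : List ℤ) :
    (M.map (x + ·)).foldr min (x + b) = x + M.foldr min b := by
  induction M with
  | nil => simp
  | cons a M ih => simp [ih]

lemma foldr_min_min (b c : ℤ) (l : List ℤ) :
    l.foldr min (min b c) = min c (l.foldr min b) := by
  induction l with
  | nil => simp [min_comm]
  | cons a l ih => simp [ih]; omega

lemma foldr_min_le_mem {a : ℤ} {l : List ℤ} (b : ℤ) (h : a ∈ l) :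
    l.foldr min b ≤ a := by
  induction l with
  | nil => cases h
  | cons x l ih =>
    rcases List.mem_cons.mp h with h | h
    · simp [h]
    · simp only [List.foldr_cons]
      exact le_trans (min_le_right _ _) (ih h)

lemma pguard_cons (x : ℤ) (l : List ℤ) :
    pguard (x :: l) = min 0 (x + pguard l) := by
  unfold pguard
  have hmem : (0:ℤ) ∈ l.inits.map List.sum := by
    simp only [List.mem_map]
    exact ⟨[], by simp, rfl⟩
  set M := l.inits.map List.sum with hM
  have hx : x ∈ M.map (x + ·) := List.mem_map.mpr ⟨0, hmem, by ring⟩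
  have h1 : (M.map (x + ·)).foldr min (min x 0) = min 0 ((M.map (x + ·)).foldr min x) :=
    foldr_min_min x 0 _
  have h1' : (M.map (x + ·)).foldr min 0 = (M.map (x + ·)).foldr min (min x 0) := by
    rw [h1]
    have h3 := foldr_min_le_mem (a := x) (l := M.map (x + ·)) 0 hx
    have h4 : (M.map (x + ·)).foldr min 0 ≤ 0 := by
      have : ∀ (b : ℤ) (L : List ℤ), L.foldr min b ≤ b := by
        intro b L; induction L with
        | nil => simp
        | cons a L ih => exact le_trans (min_le_right _ _) ih
      exact this 0 _
    have h5 : min 0 ((M.map (x + ·)).foldr min x) = min x ((M.map (x + ·)).foldr min 0) := by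
      rw [← foldr_min_min x 0, ← foldr_min_min 0 x, min_comm]
    omega
  have h2 : (M.map (x + ·)).foldr min x = x + M.foldr min 0 := by
    have := foldr_min_shift x 0 M; simpa using this
  have hrw : (x :: l).inits.map List.sum = 0 :: M.map (x + ·) := by
    rw [List.inits]
    simp [hM, List.map_map, Function.comp]
  rw [hrw, List.foldr_cons, h1', h1, h2]
  omega

lemma pguard_nil : pguard [] = 0 := by simp [pguard]

lemma pguard_nonpos (l : List ℤ) : pguard l ≤ 0 := by
  induction l with
  | nil => simp [pguard_nil]
  | cons x l ih => rw [pguard_cons]; omega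

lemma pguard_append (a b : List ℤ) :
    pguard (a ++ b) = min (pguard a) (a.sum + pguard b) := by
  induction a with
  | nil => simp [pguard_nil]; have := pguard_nonpos b; omega
  | cons x a ih =>
    simp only [List.cons_append, pguard_cons, ih, List.sum_cons]
    omega

lemma effb_append (a b : List (ℤ × ℤ)) : effb (a ++ b) = effb a + effb b := by
  simp [effb]
lemma effu_append (a b : List (ℤ × ℤ)) : effu (a ++ b) = effu a + effu b := by
  simp [effu]
lemma guardb_append (a b : List (ℤ × ℤ)) :
    guardb (a ++ b) = min (guardb a) (effb a + guardb b) := by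
  simp [guardb, effb, pguard_append]
lemma guardu_append (a b : List (ℤ × ℤ)) :
    guardu (a ++ b) = min (guardu a) (effu a + guardu b) := by
  simp [guardu, effu, pguard_append]


/-- mixing binary-nadir decompositions of two cycles. -/
theorem mixed_cycle_dominates (γ₁ γ₂ γ'₁ γ'₂ : List (ℤ × ℤ))
    (hnad₁ : guardb (γ₁ ++ γ₂) = effb γ₁) (hnad₂ : effb γ₁ = guardb γ₁)
    (hnad₃ : guardb γ₂ = 0)
    (hnad'₁ : guardb (γ'₁ ++ γ'₂) = effb γ'₁) (hnad'₂ : effb γ'₁ = guardb γ'₁)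
    (hnad'₃ : guardb γ'₂ = 0)
    (heu₁ : effu γ₁ = effu γ'₁) (heu₂ : effu γ₂ = effu γ'₂)
    (hgu : guardu (γ₁ ++ γ₂) = guardu (γ'₁ ++ γ'₂))
    (hl₁ : γ₁.length = γ'₁.length) (hl₂ : γ₂.length = γ'₂.length)
    (heb : effb (γ'₁ ++ γ'₂) < effb (γ₁ ++ γ₂))
    (hgb : guardb (γ₁ ++ γ₂) < guardb (γ'₁ ++ γ'₂)) :
    effb (γ₁ ++ γ₂) < effb (γ'₁ ++ γ₂) ∧
    effu (γ'₁ ++ γ₂) = effu (γ₁ ++ γ₂) ∧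
    guardb (γ₁ ++ γ₂) < guardb (γ'₁ ++ γ₂) ∧
    guardu (γ₁ ++ γ₂) ≤ guardu (γ'₁ ++ γ₂) ∧
    (γ'₁ ++ γ₂).length = (γ₁ ++ γ₂).length := by
  simp only [effb_append, effu_append, guardb_append, guardu_append,
    List.length_append] at *
  refine ⟨by omega, by omega, by omega, by omega, by omega⟩
end

section
/- Let γ be a positive-negative cycle (eff_b(γ) > 0, eff_u(γ) < 0) of length at most |Q| in a 2-VASS with one unary counter, and let ρ₁ γ Λ γ ρ₂ be a path inducing a valid run from configuration p(u) in which every configuration along the segment γΛγ has unary counter value at least |Q|. Then the path ρ₁ γ γ Λ ρ₂ also induces a valid run from p(u), ending at the same final configuration. -/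
lemma effb_eq_sum_fst (π : List (ℤ × ℤ)) : effb π = π.sum.1 :=
  ((AddMonoidHom.fst ℤ ℤ).map_list_sum π).symm

lemma effu_eq_sum_snd (π : List (ℤ × ℤ)) : effu π = π.sum.2 :=
  ((AddMonoidHom.snd ℤ ℤ).map_list_sum π).symm

lemma neg_length_le_effu {γ : List (ℤ × ℤ)} (hun : ∀ t ∈ γ, t.2 ∈ ({-1, 0, 1} : Set ℤ)) :
    -(γ.length : ℤ) ≤ effu γ := by
  have hge : ∀ x ∈ γ.map Prod.snd, (-1 : ℤ) ≤ x := by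
    simp only [List.mem_map]
    rintro _ ⟨t, ht, rfl⟩
    rcases hun t ht with h | h | h <;> simp_all
  simpa [effu] using List.card_nsmul_le_sum _ _ hge

lemma validFrom_iff (u : ℤ × ℤ) (π : List (ℤ × ℤ)) :
    ValidFrom u π ↔ ∀ l, l <+: π → 0 ≤ u + l.sum := by
  simp only [ValidFrom, List.mem_inits, effb_eq_sum_fst, effu_eq_sum_snd, Prod.le_def,
    Prod.fst_add, Prod.snd_add, Prod.fst_zero, Prod.snd_zero]

lemma ValidFrom.mono {u v : ℤ × ℤ} {π : List (ℤ × ℤ)} (h : ValidFrom u π) (huv : u ≤ v) :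
    ValidFrom v π := by
  rw [validFrom_iff] at h ⊢
  exact fun l hl => (h l hl).trans (add_le_add_left huv _)

lemma validFrom_append (u : ℤ × ℤ) (π σ : List (ℤ × ℤ)) :
    ValidFrom u (π ++ σ) ↔ ValidFrom u π ∧ ValidFrom (u + π.sum) σ := by
  simp only [validFrom_iff]
  constructor
  · intro h
    refine ⟨fun l hl => h l (hl.trans (List.prefix_append _ _)), fun l hl => ?_⟩
    simpa [add_assoc] using h (π ++ l) ((List.prefix_append_right_inj π).2 hl)
  · rintro ⟨hπ, hσ⟩ l hl
    rcases List.prefix_or_prefix_of_prefix hl (List.prefix_append π σ) with h | ⟨l', rfl⟩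
    · exact hπ l h
    · simpa [add_assoc] using hσ l' ((List.prefix_append_right_inj π).1 hl)

lemma validFrom_sub_of_le_snd {u : ℤ × ℤ} {π ρ σ : List (ℤ × ℤ)} {N : ℤ}
    (hvalid : ValidFrom u π) (hpre : ρ ++ σ <+: π)
    (hseg : ∀ n, ρ.length ≤ n → n ≤ ρ.length + σ.length → N ≤ u.2 + effu (π.take n)) :
    ValidFrom (u + ρ.sum - (0, N)) σ := by
  rw [validFrom_iff] at hvalid ⊢
  intro l hl
  have hρl : ρ ++ l <+: π := ((List.prefix_append_right_inj ρ).2 hl).trans hpre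
  have htake := (List.prefix_iff_eq_take.1 hρl).symm
  rw [List.length_append] at htake
  have hN := hseg (ρ.length + l.length) (by omega) (by have := hl.length_le; omega)
  rw [htake, effu_eq_sum_snd] at hN
  have h0 := hvalid _ hρl
  simp only [Prod.le_def, List.sum_append, Prod.fst_add, Prod.snd_add, Prod.fst_sub,
    Prod.snd_sub, Prod.fst_zero, Prod.snd_zero] at h0 hN ⊢
  constructor <;> linarith

theorem reshuffle_positive_negative_general {Q : Type*} [Fintype Q] (u : ℤ × ℤ)
    (ρ₁ γ Λ ρ₂ : List (ℤ × ℤ))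
    (hlen : γ.length ≤ Fintype.card Q)
    (hun : ∀ t ∈ γ, t.2 ∈ ({-1, 0, 1} : Set ℤ))
    (hposb : 0 < effb γ)
    (hvalid : ValidFrom u (ρ₁ ++ γ ++ Λ ++ γ ++ ρ₂))
    (hseg : ∀ l, ρ₁.length ≤ l → l ≤ ρ₁.length + 2 * γ.length + Λ.length →
      (Fintype.card Q : ℤ) ≤ u.2 + effu ((ρ₁ ++ γ ++ Λ ++ γ ++ ρ₂).take l)) :
    ValidFrom u (ρ₁ ++ γ ++ γ ++ Λ ++ ρ₂) ∧
    effb (ρ₁ ++ γ ++ γ ++ Λ ++ ρ₂) = effb (ρ₁ ++ γ ++ Λ ++ γ ++ ρ₂) ∧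
    effu (ρ₁ ++ γ ++ γ ++ Λ ++ ρ₂) = effu (ρ₁ ++ γ ++ Λ ++ γ ++ ρ₂) := by
  have hsum : (ρ₁ ++ γ ++ γ ++ Λ ++ ρ₂).sum = (ρ₁ ++ γ ++ Λ ++ γ ++ ρ₂).sum := by
    simp only [List.sum_append]; abel
  refine ⟨?_, by rw [effb_eq_sum_fst, effb_eq_sum_fst, hsum],
    by rw [effu_eq_sum_snd, effu_eq_sum_snd, hsum]⟩
  have hhigh : ValidFrom (u + ρ₁.sum - (0, (Fintype.card Q : ℤ))) (γ ++ Λ) :=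
    validFrom_sub_of_le_snd (ρ := ρ₁) hvalid ⟨γ ++ ρ₂, by simp⟩
      (fun n h₁ h₂ => hseg n h₁ (by simp only [List.length_append] at h₂; omega))
  have hshift : u + ρ₁.sum - (0, (Fintype.card Q : ℤ)) ≤ u + ρ₁.sum + γ.sum := by
    have hγu := neg_length_le_effu hun
    rw [effb_eq_sum_fst] at hposb
    rw [effu_eq_sum_snd] at hγu
    simp only [Prod.le_def, Prod.fst_add, Prod.snd_add, Prod.fst_sub, Prod.snd_sub]
    constructor <;> omega
  rw [validFrom_append, validFrom_append, validFrom_append, validFrom_append] at hvalid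
  obtain ⟨⟨⟨⟨hρ₁, hγ⟩, -⟩, -⟩, hρ₂⟩ := hvalid
  rw [show ρ₁ ++ γ ++ γ ++ Λ ++ ρ₂ = ρ₁ ++ γ ++ (γ ++ Λ) ++ ρ₂ by simp,
    validFrom_append, validFrom_append, validFrom_append]
  refine ⟨⟨⟨hρ₁, hγ⟩, by simpa [add_assoc] using hhigh.mono hshift⟩, ?_⟩
  convert hρ₂ using 2
  simp only [List.sum_append]; abel

/-- reshuffling a positive-negative short cycle earlier past `Λ`
preserves validity and the final configuration. -/
theorem reshuffle_positive_negative {Q : Type*} [Fintype Q] (u : ℤ × ℤ)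
    (ρ₁ γ Λ ρ₂ : List (ℤ × ℤ))
    (hlen : γ.length ≤ Fintype.card Q)
    (hun : ∀ t ∈ γ, t.2 ∈ ({-1, 0, 1} : Set ℤ))
    (hposb : 0 < effb γ) (hnegu : effu γ < 0)
    (hvalid : ValidFrom u (ρ₁ ++ γ ++ Λ ++ γ ++ ρ₂))
    (hseg : ∀ l, ρ₁.length ≤ l → l ≤ ρ₁.length + 2 * γ.length + Λ.length →
      (Fintype.card Q : ℤ) ≤ u.2 + effu ((ρ₁ ++ γ ++ Λ ++ γ ++ ρ₂).take l)) :
    ValidFrom u (ρ₁ ++ γ ++ γ ++ Λ ++ ρ₂) ∧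
    effb (ρ₁ ++ γ ++ γ ++ Λ ++ ρ₂) = effb (ρ₁ ++ γ ++ Λ ++ γ ++ ρ₂) ∧
    effu (ρ₁ ++ γ ++ γ ++ Λ ++ ρ₂) = effu (ρ₁ ++ γ ++ Λ ++ γ ++ ρ₂) :=
  reshuffle_positive_negative_general u ρ₁ γ Λ ρ₂ hlen hun hposb hvalid hseg
end
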